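/- Let G be a finite group containing an abelian subgroup A of index n. Then G contains a normal abelian subgroup of index at most n². -/

import Mathlib

open Pointwise

/-- The Chermak–Delgado index-measure of a subgroup `H` of `G`:
`m(G,H) = |G:H| * |G:C_G(H)|`. -/
noncomputable def cdMeasure {G : Type*} [Group G] (H : Subgroup G) : ℕ :=
  H.index * (Subgroup.centralizer (H : Set G)).index

/-- `μ(G)`, the minimum of `m(G,H)` over all subgroups `H ≤ G`. -/
noncomputable def cdMu (G : Type*) [Group G] : ℕ :=
  sInf {n : ℕ | ∃ H : Subgroup G, cdMeasure H = n}

/-- A subgroup `H ≤ G` is a CD-subgroup if `m(G,H) = μ(G)`. -/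
def IsCDSubgroup {G : Type*} [Group G] (H : Subgroup G) : Prop :=
  cdMeasure H = cdMu G

/-!
The Chermak–Delgado measure `m(H) = |G:H| |G:C(H)|` is submodular in the multiplicative sense,
`m(H ⊓ K) m(H ⊔ K) ≤ m(H) m(K)`, so the subgroups of minimal measure `μ` are closed under
intersection; they are also closed under taking centralizers and under automorphisms. Hence there
is a least CD-subgroup `N`. It lies in its centralizer `C(N)` and in each of its conjugates, so it
is abelian and normal, and `|G:N| ≤ m(N) = μ ≤ m(A) ≤ |G:A|²` because `A ≤ C(A)` for abelian `A`.
-/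

namespace Subgroup

variable {G : Type*} [Group G]

theorem index_inf_mul_index_le_of_le {H K L : Subgroup G} (hH : H ≤ L) (hK : K ≤ L) :
    (H ⊓ K).index * L.index ≤ H.index * K.index :=
  calc (H ⊓ K).index * L.index = (H ⊓ K).relIndex L * L.index * L.index := by
        rw [relIndex_mul_index (inf_le_left.trans hH)]
    _ ≤ H.relIndex L * K.relIndex L * L.index * L.index := by gcongr; exact relIndex_inf_le
    _ = (H.relIndex L * L.index) * (K.relIndex L * L.index) := by ring
    _ = H.index * K.index := by rw [relIndex_mul_index hH, relIndex_mul_index hK]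

theorem centralizer_sup (H K : Subgroup G) :
    centralizer ((H ⊔ K : Subgroup G) : Set G) = centralizer H ⊓ centralizer K :=
  le_antisymm
    (le_inf (centralizer_le (SetLike.coe_subset_coe.mpr le_sup_left))
      (centralizer_le (SetLike.coe_subset_coe.mpr le_sup_right)))
    (le_centralizer_iff.mp
      (sup_le (le_centralizer_iff.mp inf_le_left) (le_centralizer_iff.mp inf_le_right)))

theorem centralizer_map_equiv {G' : Type*} [Group G'] (e : G ≃* G') (H : Subgroup G) :
    centralizer ((H.map e.toMonoidHom : Subgroup G') : Set G') =
      (centralizer (H : Set G)).map e.toMonoidHom := by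
  ext x
  simp only [mem_map_equiv, mem_centralizer_iff, SetLike.mem_coe, e.surjective.forall,
    MulEquiv.symm_apply_apply]
  refine forall₂_congr fun h _ => ?_
  rw [← e.symm.injective.eq_iff, map_mul, map_mul, e.symm_apply_apply]

end Subgroup

open Subgroup

section ChermakDelgado

variable {G : Type*} [Group G]

theorem cdMu_le_cdMeasure (H : Subgroup G) : cdMu G ≤ cdMeasure H :=
  Nat.sInf_le ⟨H, rfl⟩

theorem exists_isCDSubgroup : ∃ H : Subgroup G, IsCDSubgroup H :=
  Nat.sInf_mem (⟨cdMeasure ⊤, ⊤, rfl⟩ : {n : ℕ | ∃ H : Subgroup G, cdMeasure H = n}.Nonempty)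

theorem cdMeasure_map_equiv {G' : Type*} [Group G'] (e : G ≃* G') (H : Subgroup G) :
    cdMeasure (H.map e.toMonoidHom) = cdMeasure H := by
  rw [cdMeasure, cdMeasure, centralizer_map_equiv, index_map_of_bijective e.bijective,
    index_map_of_bijective e.bijective]

theorem IsCDSubgroup.map_equiv {H : Subgroup G} (hH : IsCDSubgroup H) (e : G ≃* G) :
    IsCDSubgroup (H.map e.toMonoidHom) :=
  (cdMeasure_map_equiv e H).trans hH

theorem normal_of_isLeast_isCDSubgroup {N : Subgroup G}
    (hN : IsLeast {H | IsCDSubgroup H} N) : N.Normal where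
  conj_mem x hx g := by
    have hle : N ≤ N.map (MulAut.conj g⁻¹).toMonoidHom := hN.2 (hN.1.map_equiv _)
    simpa only [mem_map_equiv, MulAut.conj_symm_apply, inv_inv] using hle hx

variable [Finite G]

theorem index_le_cdMeasure (H : Subgroup G) : H.index ≤ cdMeasure H :=
  Nat.le_mul_of_pos_right _ (Nat.pos_of_ne_zero FiniteIndex.index_ne_zero)

theorem cdMu_pos : 0 < cdMu G := by
  obtain ⟨H, hH⟩ := exists_isCDSubgroup (G := G)
  rw [← hH, cdMeasure]
  exact Nat.pos_of_ne_zero (mul_ne_zero FiniteIndex.index_ne_zero FiniteIndex.index_ne_zero)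

theorem cdMeasure_le_index_sq_of_isMulCommutative (A : Subgroup G) [IsMulCommutative A] :
    cdMeasure A ≤ A.index ^ 2 := by
  rw [cdMeasure, sq]
  exact Nat.mul_le_mul_left _ (index_antitone (le_centralizer A))

theorem cdMeasure_centralizer_le (H : Subgroup G) :
    cdMeasure (centralizer (H : Set G)) ≤ cdMeasure H := by
  rw [cdMeasure, cdMeasure, mul_comm H.index]
  exact Nat.mul_le_mul_left _ (index_antitone (le_centralizer_iff.mp le_rfl))

theorem IsCDSubgroup.centralizer {H : Subgroup G} (hH : IsCDSubgroup H) :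
    IsCDSubgroup (centralizer (H : Set G)) :=
  le_antisymm (hH ▸ cdMeasure_centralizer_le H) (cdMu_le_cdMeasure _)

theorem cdMeasure_inf_mul_cdMeasure_sup_le (H K : Subgroup G) :
    cdMeasure (H ⊓ K) * cdMeasure (H ⊔ K) ≤ cdMeasure H * cdMeasure K := by
  set CH := centralizer (H : Set G)
  set CK := centralizer (K : Set G)
  have hindex : (H ⊓ K).index * (H ⊔ K).index ≤ H.index * K.index :=
    index_inf_mul_index_le_of_le le_sup_left le_sup_right
  have hcent : (centralizer ((H ⊓ K : Subgroup G) : Set G)).index *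
      (centralizer ((H ⊔ K : Subgroup G) : Set G)).index ≤ CH.index * CK.index := by
    have hle : CH ⊔ CK ≤ centralizer ((H ⊓ K : Subgroup G) : Set G) :=
      sup_le (centralizer_le (SetLike.coe_subset_coe.mpr inf_le_left))
        (centralizer_le (SetLike.coe_subset_coe.mpr inf_le_right))
    calc _ ≤ (CH ⊔ CK).index * (CH ⊓ CK).index := by
          rw [centralizer_sup]; gcongr
      _ ≤ CH.index * CK.index := by
          rw [mul_comm]; exact index_inf_mul_index_le_of_le le_sup_left le_sup_right
  calc cdMeasure (H ⊓ K) * cdMeasure (H ⊔ K)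
      = ((H ⊓ K).index * (H ⊔ K).index) * ((centralizer ((H ⊓ K : Subgroup G) : Set G)).index *
          (centralizer ((H ⊔ K : Subgroup G) : Set G)).index) := by
        simp only [cdMeasure]; ring
    _ ≤ (H.index * K.index) * (CH.index * CK.index) := Nat.mul_le_mul hindex hcent
    _ = cdMeasure H * cdMeasure K := by simp only [cdMeasure, CH, CK]; ring

theorem IsCDSubgroup.inf {H K : Subgroup G} (hH : IsCDSubgroup H) (hK : IsCDSubgroup K) :
    IsCDSubgroup (H ⊓ K) := by
  refine le_antisymm (Nat.le_of_mul_le_mul_right ?_ (cdMu_pos (G := G))) (cdMu_le_cdMeasure _)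
  calc cdMeasure (H ⊓ K) * cdMu G ≤ cdMeasure (H ⊓ K) * cdMeasure (H ⊔ K) :=
        Nat.mul_le_mul_left _ (cdMu_le_cdMeasure _)
    _ ≤ cdMeasure H * cdMeasure K := cdMeasure_inf_mul_cdMeasure_sup_le H K
    _ = cdMu G * cdMu G := by rw [hH, hK]

theorem exists_isLeast_isCDSubgroup : ∃ N : Subgroup G, IsLeast {H | IsCDSubgroup H} N := by
  obtain ⟨N, hN⟩ :=
    exists_minimal_of_wellFoundedLT (fun H : Subgroup G => IsCDSubgroup H) exists_isCDSubgroup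
  exact ⟨N, hN.prop, fun K hK => inf_eq_left.mp (hN.eq_of_le (hN.prop.inf hK) inf_le_left)⟩

theorem isMulCommutative_of_isLeast_isCDSubgroup {N : Subgroup G}
    (hN : IsLeast {H | IsCDSubgroup H} N) : IsMulCommutative N :=
  le_centralizer_iff_isMulCommutative.mp (hN.2 hN.1.centralizer)

end ChermakDelgado

theorem stmt_10 {G : Type*} [Group G] [Finite G] (A : Subgroup G) (n : ℕ)
    (hA : IsMulCommutative A) (hn : A.index = n) :
    ∃ N : Subgroup G, N.Normal ∧ IsMulCommutative N ∧ N.index ≤ n ^ 2 := by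
  obtain ⟨N, hN⟩ := exists_isLeast_isCDSubgroup (G := G)
  refine ⟨N, normal_of_isLeast_isCDSubgroup hN, isMulCommutative_of_isLeast_isCDSubgroup hN, ?_⟩
  calc N.index ≤ cdMeasure N := index_le_cdMeasure N
    _ = cdMu G := hN.1
    _ ≤ cdMeasure A := cdMu_le_cdMeasure A
    _ ≤ n ^ 2 := hn ▸ cdMeasure_le_index_sq_of_isMulCommutative A
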